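/- Let λ > 0 and n be a non-negative integer, and let π be the truncated Poisson probability mass function on {0,1,...,n}. For a subset A ⊆ {0,1,...,n}, let g_A : {0,1,...,n+1} → ℝ be the solution of the Poisson Stein equation defined by g_A(0) = 0, g_A(i+1) = ( 1_A(i) − π(A) + i·g_A(i) ) / λ for 0 ≤ i < n, and g_A(n+1) = 0, where π(A) = ∑_{j ∈ A} π_j. Then max_{0 ≤ i ≤ n} | g_A(i+1) − g_A(i) | ≤ (1 − π_0)/λ. -/

import Mathlib

/-!
The Stein solution is additive in the set, `g_A = ∑_{k ∈ A} g_{k}`, and for the singleton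
`g_{k}(i + 1) = π_k (1[k ≤ i] - Π(i)) / (λ π_i)`, where `Π` is the truncated Poisson cdf.
Because the ratios `π_{i+1} / π_i = λ / (i + 1)` decrease, both `Π(i) / π_i` and
`(1 - Π(i)) / π_i` are monotone, so every increment `g_{k}(i + 1) - g_{k}(i)` with `k ≠ i` is
nonpositive, while the one at `k = i` is at most `(1 - π_0) / λ`. The increments over all
`k ≤ n` sum to zero (the solution for `A = {0, …, n}` vanishes), hence the increment for any
`A` lies between `-(g_{i}(i + 1) - g_{i}(i))` and `g_{i}(i + 1) - g_{i}(i)`.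
-/

/-- The Poisson pmf: `P(Z = k)` for `Z ~ Po(λ)`. -/
noncomputable def poissonPmf (lam : ℝ) (k : ℕ) : ℝ :=
  Real.exp (-lam) * lam ^ k / k.factorial

/-- The truncated Poisson pmf on `{0,...,n}`:
`π_i = P(Z = i) / P(Z ≤ n)` for `Z ~ Po(λ)`. -/
noncomputable def truncPoissonPmf (lam : ℝ) (n i : ℕ) : ℝ :=
  poissonPmf lam i / ∑ j ∈ Finset.range (n + 1), poissonPmf lam j

/-- The solution of the truncated Poisson Stein equation for the test function `f = 1_A`,
defined by `g 0 = 0`, the forward recursion `g (i+1) = (1_A(i) - π(A) + i g(i)) / λ`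
for `i < n`, and `g (i+1) = 0` for `i ≥ n` (in particular `g (n+1) = 0`). -/
noncomputable def steinSolPo (lam : ℝ) (n : ℕ) (A : Finset ℕ) : ℕ → ℝ
  | 0 => 0
  | (i + 1) =>
    if i < n then
      ((if i ∈ A then (1 : ℝ) else 0) - ∑ j ∈ A, truncPoissonPmf lam n j
          + i * steinSolPo lam n A i) / lam
    else 0

open Finset

theorem abs_sum_le_of_sum_eq_zero {ι : Type*} [DecidableEq ι] {s A : Finset ι} {f : ι → ℝ}
    {m : ι} (hm : m ∈ s) (hA : A ⊆ s) (hs : ∑ k ∈ s, f k = 0)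
    (hf : ∀ k ∈ s, k ≠ m → f k ≤ 0) : |∑ k ∈ A, f k| ≤ f m := by
  have hle : ∀ B ⊆ s, ∑ k ∈ insert m B, f k ≤ f m := fun B hB => by
    simpa using sum_le_sum_of_subset_of_nonpos' (singleton_subset_iff.2 (mem_insert_self m B))
      fun k hk hkm => hf k (insert_subset hm hB hk) (by simpa using hkm)
  have hfm : 0 ≤ f m := by simpa [insert_eq_of_mem hm, hs] using hle s subset_rfl
  have hup : ∀ B ⊆ s, ∑ k ∈ B, f k ≤ f m := fun B hB =>
    (sum_le_sum_of_subset_of_nonneg (subset_insert m B) fun k hk hkB => by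
      obtain rfl | hk := mem_insert.1 hk
      · exact hfm
      · exact absurd hk hkB).trans (hle B hB)
  have hcompl := sum_sdiff hA (f := f)
  rw [abs_le]
  constructor
  · linarith [hup (s \ A) sdiff_subset]
  · exact hup A hA

section RatioAntitone

variable {q : ℕ → ℝ}

theorem sum_range_mul_succ_le_of_ratio_antitone
    (hq : ∀ a b, a ≤ b → q a * q (b + 1) ≤ q (a + 1) * q b) (t : ℕ) :
    (∑ m ∈ range (t + 1), q m) * q (t + 1) ≤ (∑ m ∈ range (t + 1), q (m + 1)) * q t := by
  rw [sum_mul, sum_mul]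
  exact sum_le_sum fun m hm => hq m t (Nat.lt_succ_iff.1 (mem_range.1 hm))

theorem sum_Ico_mul_le_of_ratio_antitone (hq0 : ∀ k, 0 ≤ q k)
    (hq : ∀ a b, a ≤ b → q a * q (b + 1) ≤ q (a + 1) * q b) (t n : ℕ) :
    (∑ m ∈ Ico (t + 2) (n + 1), q m) * q t
      ≤ (∑ m ∈ Ico (t + 1) (n + 1), q m) * q (t + 1) := by
  rw [← sum_Ico_add' q (t + 1) n 1, sum_mul, sum_mul]
  calc ∑ m ∈ Ico (t + 1) n, q (m + 1) * q t
      ≤ ∑ m ∈ Ico (t + 1) n, q m * q (t + 1) :=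
        sum_le_sum fun m hm => by linarith [hq t m (by linarith [(mem_Ico.1 hm).1])]
    _ ≤ ∑ m ∈ Ico (t + 1) (n + 1), q m * q (t + 1) :=
        sum_le_sum_of_subset_of_nonneg (Ico_subset_Ico_right n.le_succ)
          fun m _ _ => mul_nonneg (hq0 m) (hq0 (t + 1))

end RatioAntitone

theorem poissonPmf_pos {lam : ℝ} (hlam : 0 < lam) (k : ℕ) : 0 < poissonPmf lam k := by
  unfold poissonPmf
  positivity

theorem poissonPmf_succ_mul (lam : ℝ) (k : ℕ) :
    (k + 1) * poissonPmf lam (k + 1) = lam * poissonPmf lam k := by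
  unfold poissonPmf
  rw [Nat.factorial_succ]
  push_cast
  field_simp
  ring

theorem sum_range_poissonPmf_pos {lam : ℝ} (hlam : 0 < lam) (n : ℕ) :
    0 < ∑ j ∈ range (n + 1), poissonPmf lam j :=
  sum_pos (fun j _ => poissonPmf_pos hlam j) nonempty_range_add_one

theorem truncPoissonPmf_pos {lam : ℝ} (hlam : 0 < lam) (n k : ℕ) :
    0 < truncPoissonPmf lam n k :=
  div_pos (poissonPmf_pos hlam k) (sum_range_poissonPmf_pos hlam n)

theorem truncPoissonPmf_succ_mul (lam : ℝ) (n k : ℕ) :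
    (k + 1) * truncPoissonPmf lam n (k + 1) = lam * truncPoissonPmf lam n k := by
  simp only [truncPoissonPmf, ← mul_div_assoc, poissonPmf_succ_mul]

theorem truncPoissonPmf_ratio_antitone {lam : ℝ} (hlam : 0 < lam) (n : ℕ) {a b : ℕ}
    (hab : a ≤ b) :
    truncPoissonPmf lam n a * truncPoissonPmf lam n (b + 1)
      ≤ truncPoissonPmf lam n (a + 1) * truncPoissonPmf lam n b := by
  have ha := truncPoissonPmf_succ_mul lam n a
  have hb := truncPoissonPmf_succ_mul lam n b
  have hab' : (a : ℝ) + 1 ≤ b + 1 := by exact_mod_cast Nat.succ_le_succ hab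
  have hpos : 0 ≤ lam * truncPoissonPmf lam n a * truncPoissonPmf lam n b :=
    (mul_pos (mul_pos hlam (truncPoissonPmf_pos hlam n a)) (truncPoissonPmf_pos hlam n b)).le
  have key : ((a : ℝ) + 1) * ((b + 1) * (truncPoissonPmf lam n a * truncPoissonPmf lam n (b + 1)))
      ≤ ((a : ℝ) + 1) * ((b + 1) * (truncPoissonPmf lam n (a + 1) * truncPoissonPmf lam n b)) :=
    calc _ = ((a : ℝ) + 1) * (lam * truncPoissonPmf lam n a * truncPoissonPmf lam n b) := by
          linear_combination ((a : ℝ) + 1) * truncPoissonPmf lam n a * hb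
      _ ≤ ((b : ℝ) + 1) * (lam * truncPoissonPmf lam n a * truncPoissonPmf lam n b) :=
          mul_le_mul_of_nonneg_right hab' hpos
      _ = _ := by linear_combination -((b : ℝ) + 1) * truncPoissonPmf lam n b * ha
  exact le_of_mul_le_mul_left (le_of_mul_le_mul_left key (by positivity)) (by positivity)

noncomputable def truncPoissonCdf (lam : ℝ) (n i : ℕ) : ℝ :=
  ∑ k ∈ range (i + 1), truncPoissonPmf lam n k

theorem truncPoissonCdf_self {lam : ℝ} (hlam : 0 < lam) (n : ℕ) :
    truncPoissonCdf lam n n = 1 := by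
  simp only [truncPoissonCdf, truncPoissonPmf, ← sum_div]
  exact div_self (sum_range_poissonPmf_pos hlam n).ne'

theorem truncPoissonCdf_zero (lam : ℝ) (n : ℕ) :
    truncPoissonCdf lam n 0 = truncPoissonPmf lam n 0 := by
  simp [truncPoissonCdf]

theorem truncPoissonCdf_succ (lam : ℝ) (n i : ℕ) :
    truncPoissonCdf lam n (i + 1) = truncPoissonCdf lam n i + truncPoissonPmf lam n (i + 1) :=
  sum_range_succ _ _

theorem one_sub_truncPoissonCdf {lam : ℝ} (hlam : 0 < lam) {n i : ℕ} (hi : i ≤ n) :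
    1 - truncPoissonCdf lam n i = ∑ k ∈ Ico (i + 1) (n + 1), truncPoissonPmf lam n k := by
  rw [← truncPoissonCdf_self hlam n, truncPoissonCdf, truncPoissonCdf,
    ← sum_range_add_sum_Ico _ (Nat.succ_le_succ hi), add_sub_cancel_left]

theorem truncPoissonCdf_mul_succ_le {lam : ℝ} (hlam : 0 < lam) (n t : ℕ) :
    truncPoissonCdf lam n t * truncPoissonPmf lam n (t + 1)
      ≤ (truncPoissonCdf lam n (t + 1) - truncPoissonPmf lam n 0) * truncPoissonPmf lam n t := by
  have hshift := sum_range_succ' (truncPoissonPmf lam n) (t + 1)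
  rw [← truncPoissonCdf] at hshift
  rw [hshift, add_sub_cancel_right]
  exact sum_range_mul_succ_le_of_ratio_antitone
    (fun a b => truncPoissonPmf_ratio_antitone hlam n) t

theorem one_sub_truncPoissonCdf_mul_le {lam : ℝ} (hlam : 0 < lam) {n t : ℕ} (ht : t + 1 ≤ n) :
    (1 - truncPoissonCdf lam n (t + 1)) * truncPoissonPmf lam n t
      ≤ (1 - truncPoissonCdf lam n t) * truncPoissonPmf lam n (t + 1) := by
  rw [one_sub_truncPoissonCdf hlam ht, one_sub_truncPoissonCdf hlam (Nat.le_of_succ_le ht)]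
  exact sum_Ico_mul_le_of_ratio_antitone (fun k => (truncPoissonPmf_pos hlam n k).le)
    (fun a b => truncPoissonPmf_ratio_antitone hlam n) t n

theorem steinSolPo_eq_sum_singleton (lam : ℝ) (n : ℕ) (A : Finset ℕ) (i : ℕ) :
    steinSolPo lam n A i = ∑ k ∈ A, steinSolPo lam n {k} i := by
  induction i with
  | zero => simp [steinSolPo]
  | succ i ih =>
    by_cases hi : i < n
    · simp only [steinSolPo, hi, if_true, mem_singleton, sum_singleton]
      rw [← sum_div, sum_add_distrib, sum_sub_distrib, ← mul_sum, ← ih, sum_ite_eq]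
    · simp [steinSolPo, hi]

theorem steinSolPo_range_eq_zero {lam : ℝ} (hlam : 0 < lam) (n i : ℕ) :
    steinSolPo lam n (range (n + 1)) i = 0 := by
  induction i with
  | zero => rfl
  | succ i ih =>
    have hsum : ∑ j ∈ range (n + 1), truncPoissonPmf lam n j = 1 := truncPoissonCdf_self hlam n
    by_cases hi : i < n
    · simp [steinSolPo, hi, ih, hsum, mem_range.2 (Nat.lt_succ_of_lt hi)]
    · simp [steinSolPo, hi]

theorem steinSolPo_singleton_succ_rec {lam : ℝ} (hlam : lam ≠ 0) {n k i : ℕ} (hi : i < n) :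
    lam * steinSolPo lam n {k} (i + 1)
      = (if k = i then 1 else 0) - truncPoissonPmf lam n k + i * steinSolPo lam n {k} i := by
  rw [steinSolPo, if_pos hi, sum_singleton, mul_div_cancel₀ _ hlam]
  simp only [mem_singleton, eq_comm]

theorem mul_steinSolPo_singleton_succ {lam : ℝ} (hlam : 0 < lam) {n k i : ℕ} (hi : i < n) :
    lam * truncPoissonPmf lam n i * steinSolPo lam n {k} (i + 1)
      = truncPoissonPmf lam n k * ((if k ≤ i then 1 else 0) - truncPoissonCdf lam n i) := by
  induction i with
  | zero =>
    have h := steinSolPo_singleton_succ_rec hlam.ne' (k := k) hi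
    have hind : truncPoissonPmf lam n 0 * (if k = 0 then 1 else 0)
        = truncPoissonPmf lam n k * (if k ≤ 0 then 1 else 0) := by
      split_ifs <;> first | omega | simp_all
    rw [truncPoissonCdf_zero]
    linear_combination truncPoissonPmf lam n 0 * h + hind
  | succ t ih =>
    have ih := ih (Nat.lt_of_succ_lt hi)
    have hrec := truncPoissonPmf_succ_mul lam n t
    have h := steinSolPo_singleton_succ_rec hlam.ne' (k := k) hi
    have hind : truncPoissonPmf lam n (t + 1) * (if k = t + 1 then 1 else 0)
        + truncPoissonPmf lam n k * (if k ≤ t then 1 else 0)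
        = truncPoissonPmf lam n k * (if k ≤ t + 1 then 1 else 0) := by
      split_ifs <;> first | omega | simp_all
    rw [truncPoissonCdf_succ]
    push_cast at h
    linear_combination truncPoissonPmf lam n (t + 1) * h + steinSolPo lam n {k} (t + 1) * hrec
      + ih + hind

theorem steinSolPo_singleton_succ {lam : ℝ} (hlam : 0 < lam) {n k i : ℕ} (hk : k ≤ n)
    (hi : i ≤ n) :
    steinSolPo lam n {k} (i + 1)
      = truncPoissonPmf lam n k * ((if k ≤ i then 1 else 0) - truncPoissonCdf lam n i)
        / (lam * truncPoissonPmf lam n i) := by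
  rcases hi.lt_or_eq with hi | rfl
  · rw [eq_div_iff (mul_pos hlam (truncPoissonPmf_pos hlam n i)).ne', mul_comm,
      mul_steinSolPo_singleton_succ hlam hi]
  · simp [steinSolPo, hk, truncPoissonCdf_self hlam]

theorem steinSolPo_singleton_sub_nonpos {lam : ℝ} (hlam : 0 < lam) {n k i : ℕ} (hk : k ≤ n)
    (hi : i ≤ n) (hki : k ≠ i) :
    steinSolPo lam n {k} (i + 1) - steinSolPo lam n {k} i ≤ 0 := by
  have hπ := truncPoissonPmf_pos hlam n
  rw [steinSolPo_singleton_succ hlam hk hi]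
  rcases i with _ | t
  · rw [if_neg (by omega), truncPoissonCdf_zero, steinSolPo, sub_zero]
    exact div_nonpos_of_nonpos_of_nonneg (by nlinarith [hπ k, hπ 0]) (mul_pos hlam (hπ 0)).le
  rw [steinSolPo_singleton_succ hlam hk (Nat.le_of_succ_le hi), sub_nonpos,
    div_le_div_iff₀ (mul_pos hlam (hπ _)) (mul_pos hlam (hπ _))]
  rcases Nat.lt_or_ge t k with htk | hkt
  · have hcdf : truncPoissonCdf lam n t * truncPoissonPmf lam n (t + 1)
        ≤ truncPoissonCdf lam n (t + 1) * truncPoissonPmf lam n t := by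
      nlinarith [truncPoissonCdf_mul_succ_le hlam n t, mul_pos (hπ 0) (hπ t)]
    rw [if_neg (by omega), if_neg (by omega)]
    nlinarith [mul_le_mul_of_nonneg_left hcdf (mul_pos (hπ k) hlam).le]
  · have htail := one_sub_truncPoissonCdf_mul_le hlam hi
    rw [if_pos (by omega), if_pos hkt]
    nlinarith [mul_le_mul_of_nonneg_left htail (mul_pos (hπ k) hlam).le]

theorem steinSolPo_singleton_self_sub_le {lam : ℝ} (hlam : 0 < lam) {n i : ℕ} (hi : i ≤ n) :
    steinSolPo lam n {i} (i + 1) - steinSolPo lam n {i} i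
      ≤ (1 - truncPoissonPmf lam n 0) / lam := by
  have hπ := truncPoissonPmf_pos hlam n
  rw [steinSolPo_singleton_succ hlam hi hi, if_pos le_rfl]
  rcases i with _ | t
  · rw [truncPoissonCdf_zero, steinSolPo, sub_zero, mul_comm lam,
      mul_div_mul_left _ _ (hπ 0).ne']
  rw [steinSolPo_singleton_succ hlam hi (Nat.le_of_succ_le hi), if_neg (by omega)]
  have hcdf := truncPoissonCdf_mul_succ_le hlam n t
  have hden := fun j => mul_pos hlam (hπ j)
  rw [div_sub_div _ _ (hden _).ne' (hden _).ne', div_le_div_iff₀ (mul_pos (hden _) (hden _)) hlam]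
  nlinarith [mul_le_mul_of_nonneg_left hcdf (mul_pos (hπ (t + 1)) hlam).le]

/-- Stein factor bound for the truncated Poisson distribution: the first difference of
the Stein solution is bounded by `(1 - π₀)/λ`. -/
theorem truncPoisson_stein_factor (lam : ℝ) (hlam : 0 < lam)
    (n : ℕ) (A : Finset ℕ) (hA : A ⊆ Finset.range (n + 1)) :
    ∀ i ≤ n, |steinSolPo lam n A (i + 1) - steinSolPo lam n A i|
      ≤ (1 - truncPoissonPmf lam n 0) / lam := by
  intro i hi
  have hsplit : ∀ B, steinSolPo lam n B (i + 1) - steinSolPo lam n B i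
      = ∑ k ∈ B, (steinSolPo lam n {k} (i + 1) - steinSolPo lam n {k} i) := fun B => by
    rw [steinSolPo_eq_sum_singleton, steinSolPo_eq_sum_singleton lam n B i, sum_sub_distrib]
  have htotal :
      ∑ k ∈ range (n + 1), (steinSolPo lam n {k} (i + 1) - steinSolPo lam n {k} i) = 0 := by
    rw [← hsplit, steinSolPo_range_eq_zero hlam, steinSolPo_range_eq_zero hlam, sub_zero]
  rw [hsplit]
  refine (abs_sum_le_of_sum_eq_zero (mem_range.2 (Nat.lt_succ_of_le hi)) hA htotal
    fun k hk hki => ?_).trans (steinSolPo_singleton_self_sub_le hlam hi)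
  exact steinSolPo_singleton_sub_nonpos hlam (Nat.le_of_lt_succ (mem_range.1 hk)) hi hki
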